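/- Let (π, t) be a representation of a C*-correspondence X over A. Then the pair (I_{(π,t)}, I'_{(π,t)}) with I_{(π,t)} = ker π and I'_{(π,t)} = π⁻¹(ψ_t(K(X))) is a T-pair: I_{(π,t)} is positively invariant and I_{(π,t)} ⊂ I'_{(π,t)} ⊂ J(I_{(π,t)}). -/

import Mathlib

/-!
`ker π` is closed and `π ⟨η, φ(a)ξ⟩ = t(η)* π(a) t(ξ)`, which gives positive invariance; the
inclusion `ker π ⊆ π⁻¹(ψ_t(K(X)))` is trivial. If `π(a) = ψ_t(k)` with `k ∈ K(X)`, then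
`t(kξ) = ψ_t(k) t(ξ) = t(φ(a)ξ)` (check on rank-one operators and pass to the limit), and since
`‖t ζ‖² = ‖π⟨ζ, ζ⟩‖`, the vectors `kξ` and `φ(a)ξ` have the same image in `X_I`. The image of `k`
in `K(X_I)` exists because the quotient map does not increase the norm of an adjointable operator
(a `2ⁿ`-th power argument based on `‖q(sζ)‖² ≤ ‖qζ‖ ‖q(s*sζ)‖`), and it implements `[φ(a)]_I`.
Finally, for `b ∈ X⁻¹(I)` one has `t(φ(b*)η) = 0`, hence `ψ_t(k) π(b) = 0` and `π(ab) = 0`.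
-/

noncomputable section

/-- A (right) Hilbert C*-module over a C*-algebra `A`. -/
class HilbertModule (A : Type*) [CStarAlgebra A] (X : Type*)
    [NormedAddCommGroup X] [NormedSpace ℂ X] : Type _ where
  rsmul : X → A → X
  inner : X → X → A
  rsmul_add_left : ∀ (x y : X) (a : A), rsmul (x + y) a = rsmul x a + rsmul y a
  rsmul_add_right : ∀ (x : X) (a b : A), rsmul x (a + b) = rsmul x a + rsmul x b
  rsmul_rsmul : ∀ (x : X) (a b : A), rsmul (rsmul x a) b = rsmul x (a * b)
  rsmul_csmul_left : ∀ (c : ℂ) (x : X) (a : A), rsmul (c • x) a = c • rsmul x a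
  rsmul_csmul_right : ∀ (c : ℂ) (x : X) (a : A), rsmul x (c • a) = c • rsmul x a
  inner_add_left : ∀ (x y z : X), inner (x + y) z = inner x z + inner y z
  inner_add_right : ∀ (x y z : X), inner x (y + z) = inner x y + inner x z
  inner_csmul_right : ∀ (c : ℂ) (x y : X), inner x (c • y) = c • inner x y
  star_inner : ∀ (x y : X), star (inner x y) = inner y x
  inner_rsmul_right : ∀ (x y : X) (a : A), inner x (rsmul y a) = inner x y * a
  inner_self_isPositive : ∀ x : X, ∃ b : A, inner x x = star b * b
  norm_sq_inner : ∀ x : X, ‖x‖ ^ 2 = ‖inner x x‖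
  norm_inner_le : ∀ x y : X, ‖inner x y‖ ≤ ‖x‖ * ‖y‖
  norm_rsmul_le : ∀ (x : X) (a : A), ‖rsmul x a‖ ≤ ‖x‖ * ‖a‖

namespace HilbertModule

variable {A : Type*} [CStarAlgebra A] {X : Type*}
  [NormedAddCommGroup X] [NormedSpace ℂ X] [HilbertModule A X]

/-- The closed submodule `X·S` generated by products `ξ·a`, `a ∈ S`. -/
def idealSub (X : Type*) {A : Type*} [CStarAlgebra A] [NormedAddCommGroup X]
    [NormedSpace ℂ X] [HilbertModule A X] (S : Set A) : Set X :=
  closure (Submodule.span ℂ {x : X | ∃ (ξ : X) (a : A), a ∈ S ∧ x = rsmul ξ a} : Set X)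

/-- The rank-one ("theta") operator `ζ ↦ ξ⟨η,ζ⟩`. -/
def rankOne (A : Type*) {X : Type*} [CStarAlgebra A] [NormedAddCommGroup X]
    [NormedSpace ℂ X] [HilbertModule A X] (ξ η : X) : X →L[ℂ] X :=
  LinearMap.mkContinuous
    { toFun := fun ζ => rsmul ξ (inner (A := A) η ζ)
      map_add' := fun x y => by
        show rsmul ξ (inner (A := A) η (x + y)) = _
        rw [inner_add_right, rsmul_add_right]
      map_smul' := fun c x => by
        show rsmul ξ (inner (A := A) η (c • x)) = _
        simp only [RingHom.id_apply]
        rw [inner_csmul_right, rsmul_csmul_right] }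
    (‖ξ‖ * ‖η‖)
    (fun ζ => by
      calc ‖rsmul ξ (inner (A := A) η ζ)‖ ≤ ‖ξ‖ * ‖inner (A := A) η ζ‖ :=
            norm_rsmul_le _ _
        _ ≤ ‖ξ‖ * (‖η‖ * ‖ζ‖) :=
            mul_le_mul_of_nonneg_left (norm_inner_le _ _) (norm_nonneg _)
        _ = ‖ξ‖ * ‖η‖ * ‖ζ‖ := (mul_assoc _ _ _).symm)

/-- The set of "compact" operators `K(X)`: the closed linear span of rank-one operators. -/
def compacts (A X : Type*) [CStarAlgebra A] [NormedAddCommGroup X]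
    [NormedSpace ℂ X] [HilbertModule A X] : Set (X →L[ℂ] X) :=
  closure (Submodule.span ℂ {T : X →L[ℂ] X | ∃ ξ η : X, T = rankOne A ξ η} : Set (X →L[ℂ] X))

/-- `K(X·I)`, viewed inside the operators on `X`: the closed span of rank-one operators
with both legs in the subset `S`. -/
def compactsOn (A : Type*) {X : Type*} [CStarAlgebra A] [NormedAddCommGroup X]
    [NormedSpace ℂ X] [HilbertModule A X] (S : Set X) : Set (X →L[ℂ] X) :=
  closure (Submodule.span ℂ
    {T : X →L[ℂ] X | ∃ ξ ∈ S, ∃ η ∈ S, T = rankOne A ξ η} : Set (X →L[ℂ] X))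

/-- An operator is adjointable if it has an adjoint with respect to the `A`-valued
inner product. -/
def IsAdjointable (A : Type*) {X : Type*} [CStarAlgebra A] [NormedAddCommGroup X]
    [NormedSpace ℂ X] [HilbertModule A X] (S : X →L[ℂ] X) : Prop :=
  ∃ T : X →L[ℂ] X, ∀ x y : X, inner (A := A) (S x) y = inner (A := A) x (T y)

end HilbertModule

/-- A C*-correspondence over `A`: a Hilbert `A`-module with a left action of `A`
by adjointable operators. -/
class Correspondence (A : Type*) [CStarAlgebra A] (X : Type*)
    [NormedAddCommGroup X] [NormedSpace ℂ X] extends HilbertModule A X where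
  lsmul : A → X → X
  lsmul_add_left : ∀ (a b : A) (x : X), lsmul (a + b) x = lsmul a x + lsmul b x
  lsmul_add_right : ∀ (a : A) (x y : X), lsmul a (x + y) = lsmul a x + lsmul a y
  lsmul_mul : ∀ (a b : A) (x : X), lsmul (a * b) x = lsmul a (lsmul b x)
  lsmul_csmul_left : ∀ (c : ℂ) (a : A) (x : X), lsmul (c • a) x = c • lsmul a x
  lsmul_csmul_right : ∀ (c : ℂ) (a : A) (x : X), lsmul a (c • x) = c • lsmul a x
  inner_lsmul_left : ∀ (a : A) (x y : X), inner (lsmul a x) y = inner x (lsmul (star a) y)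
  lsmul_rsmul : ∀ (a : A) (x : X) (b : A), lsmul a (rsmul x b) = rsmul (lsmul a x) b
  norm_lsmul_le : ∀ (a : A) (x : X), ‖lsmul a x‖ ≤ ‖a‖ * ‖x‖

namespace Correspondence

open HilbertModule

variable {A : Type*} [CStarAlgebra A] {X : Type*}
  [NormedAddCommGroup X] [NormedSpace ℂ X] [Correspondence A X]

/-- The left action `φ_X(a)` as a continuous linear operator on `X`. -/
def lact (A : Type*) {X : Type*} [CStarAlgebra A] [NormedAddCommGroup X]
    [NormedSpace ℂ X] [Correspondence A X] (a : A) : X →L[ℂ] X :=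
  LinearMap.mkContinuous
    { toFun := lsmul a
      map_add' := lsmul_add_right a
      map_smul' := fun c x => by
        show lsmul a (c • x) = _
        simp only [RingHom.id_apply]; rw [lsmul_csmul_right] }
    ‖a‖ (norm_lsmul_le a)

/-- The ideal `X(S)`: closed span of `{⟨η, φ_X(a)ξ⟩ : a ∈ S}`. -/
def corrApply (X : Type*) {A : Type*} [CStarAlgebra A] [NormedAddCommGroup X]
    [NormedSpace ℂ X] [Correspondence A X] (S : Set A) : Set A :=
  closure (Submodule.span ℂ
    {b : A | ∃ a ∈ S, ∃ ξ η : X, b = inner (A := A) η (lsmul a ξ)} : Set A)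

/-- The ideal `X⁻¹(S) = {a : ⟨η, φ_X(a)ξ⟩ ∈ S for all ξ, η}`. -/
def corrInv (X : Type*) {A : Type*} [CStarAlgebra A] [NormedAddCommGroup X]
    [NormedSpace ℂ X] [Correspondence A X] (S : Set A) : Set A :=
  {a : A | ∀ ξ η : X, inner (A := A) η (lsmul a ξ) ∈ S}

/-- The kernel of the left action `φ_X`. -/
def kerLact (X : Type*) {A : Type*} [CStarAlgebra A] [NormedAddCommGroup X]
    [NormedSpace ℂ X] [Correspondence A X] : Set A :=
  {a : A | ∀ ξ : X, lsmul a ξ = 0}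

/-- Katsura's ideal `J_X = φ_X⁻¹(K(X)) ∩ (ker φ_X)^⊥`. -/
def JX (X : Type*) {A : Type*} [CStarAlgebra A] [NormedAddCommGroup X]
    [NormedSpace ℂ X] [Correspondence A X] : Set A :=
  {a : A | lact A (X := X) a ∈ compacts A X ∧ ∀ b ∈ kerLact X, a * b = 0}

end Correspondence

open HilbertModule Correspondence

/-- Data presenting a Hilbert `B`-module `Y` as the quotient `X_I = X/XI` of a Hilbert
`A`-module `X` by a closed two-sided ideal `I` of `A` (with `B` playing the role of `A/I`). -/
structure QuotientData (A B : Type*) [CStarAlgebra A] [CStarAlgebra B]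
    (I : TwoSidedIdeal A)
    (X Y : Type*) [NormedAddCommGroup X] [NormedSpace ℂ X] [HilbertModule A X]
    [NormedAddCommGroup Y] [NormedSpace ℂ Y] [HilbertModule B Y] : Type _ where
  π : A →⋆ₐ[ℂ] B
  π_surjective : Function.Surjective π
  π_ker : ∀ a : A, π a = 0 ↔ a ∈ I
  q : X →ₗ[ℂ] Y
  q_surjective : Function.Surjective q
  q_ker : ∀ ξ : X, q ξ = 0 ↔ ξ ∈ idealSub X (I : Set A)
  q_inner : ∀ ξ ζ : X, inner (A := B) (q ξ) (q ζ) = π (inner (A := A) ξ ζ)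
  q_rsmul : ∀ (ξ : X) (a : A), q (rsmul ξ a) = rsmul (q ξ) (π a)


/-- Quotient data compatible with the left actions (presenting `X_I` as a
C*-correspondence over `A/I`). -/
structure CorrQuotientData (A B : Type*) [CStarAlgebra A] [CStarAlgebra B]
    (I : TwoSidedIdeal A)
    (X Y : Type*) [NormedAddCommGroup X] [NormedSpace ℂ X] [Correspondence A X]
    [NormedAddCommGroup Y] [NormedSpace ℂ Y] [Correspondence B Y]
    extends QuotientData A B I X Y where
  q_lsmul : ∀ (a : A) (ξ : X), q (lsmul a ξ) = lsmul (π a) (q ξ)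

/-- Katsura's ideal `J(I) = {a : [φ_X(a)]_I ∈ K(X_I), a·X⁻¹(I) ⊂ I}`, expressed via
quotient data presenting `X_I`. -/
def JofI {A B : Type*} [CStarAlgebra A] [CStarAlgebra B] {I : TwoSidedIdeal A}
    {X Y : Type*} [NormedAddCommGroup X] [NormedSpace ℂ X] [Correspondence A X]
    [NormedAddCommGroup Y] [NormedSpace ℂ Y] [HilbertModule B Y]
    (D : QuotientData A B I X Y) : Set A :=
  {a : A | (∃ T ∈ compacts B Y, ∀ ξ : X, T (D.q ξ) = D.q (lsmul a ξ)) ∧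
    ∀ b ∈ corrInv X (I : Set A), a * b ∈ I}

/-- A Hilbert `A`-bimodule: a C*-correspondence together with a left inner product
satisfying `φ_X(⟪ξ,η⟫) = θ_{ξ,η}`. -/
class HilbertBimodule (A : Type*) [CStarAlgebra A] (X : Type*)
    [NormedAddCommGroup X] [NormedSpace ℂ X] extends Correspondence A X where
  linner : X → X → A
  lsmul_linner : ∀ ξ η ζ : X, lsmul (linner ξ η) ζ = rsmul ξ (inner η ζ)

/-- The closed subspace `φ_X(S)X`: closed span of `{φ_X(a)ξ : a ∈ S}`. -/
def lsmulSet (X : Type*) {A : Type*} [CStarAlgebra A] [NormedAddCommGroup X]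
    [NormedSpace ℂ X] [Correspondence A X] (S : Set A) : Set X :=
  closure (Submodule.span ℂ
    {x : X | ∃ a ∈ S, ∃ ξ : X, x = Correspondence.lsmul a ξ} : Set X)

open scoped CStarAlgebra

theorem CStarRing.eq_of_star_mul_eq {B : Type*} [NonUnitalNormedRing B] [StarRing B]
    [CStarRing B] {x y : B} (h₁ : star x * x = star y * x) (h₂ : star x * y = star y * y) :
    x = y := by
  rw [← sub_eq_zero, ← CStarRing.star_mul_self_eq_zero_iff, star_sub, sub_mul, mul_sub,
    mul_sub, h₁, h₂, sub_self]

theorem le_of_forall_pow_two_pow_mul_le {r K c C : ℝ} (hK : 0 ≤ K) (hc : 0 < c)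
    (h : ∀ n : ℕ, r ^ 2 ^ n * c ≤ K ^ 2 ^ n * C) : r ≤ K := by
  by_contra! hKr
  rcases hK.eq_or_lt with rfl | hK
  · have := h 0
    simp only [pow_zero, pow_one, zero_mul] at this
    nlinarith
  · have hx : 1 < r / K := (one_lt_div hK).2 hKr
    obtain ⟨n, hn⟩ := pow_unbounded_of_one_lt (C / c) hx
    have hle : (r / K) ^ n ≤ (r / K) ^ 2 ^ n := pow_le_pow_right₀ hx.le Nat.lt_two_pow_self.le
    have hbound : (r / K) ^ 2 ^ n ≤ C / c := by
      rw [div_pow, div_le_div_iff₀ (by positivity) hc]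
      linarith [h n]
    linarith

namespace HilbertModule

variable {A : Type*} [CStarAlgebra A] {X : Type*}
  [NormedAddCommGroup X] [NormedSpace ℂ X] [HilbertModule A X]

theorem rankOne_apply (ξ η ζ : X) : rankOne A ξ η ζ = rsmul ξ (inner (A := A) η ζ) := rfl

theorem inner_rsmul_left (x y : X) (a : A) :
    inner (A := A) (rsmul x a) y = star a * inner (A := A) x y := by
  rw [← star_inner (A := A) y, inner_rsmul_right, star_mul, star_inner]

theorem inner_csmul_left (c : ℂ) (x y : X) :
    inner (A := A) (c • x) y = star c • inner (A := A) x y := by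
  rw [← star_inner (A := A) y, inner_csmul_right, star_smul, star_inner]

theorem inner_zero_right (x : X) : inner (A := A) x (0 : X) = 0 := by
  simpa using inner_add_right (A := A) x (0 : X) 0

theorem inner_zero_left (y : X) : inner (A := A) (0 : X) y = 0 := by
  rw [← star_inner, inner_zero_right, star_zero]

def finiteRank (A X : Type*) [CStarAlgebra A] [NormedAddCommGroup X] [NormedSpace ℂ X]
    [HilbertModule A X] : Submodule ℂ (X →L[ℂ] X) :=
  Submodule.span ℂ {T | ∃ ξ η : X, T = rankOne A ξ η}

theorem zero_mem_compacts : (0 : X →L[ℂ] X) ∈ compacts A X :=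
  subset_closure (finiteRank A X).zero_mem

def IsAdjoint (A : Type*) {X : Type*} [CStarAlgebra A] [NormedAddCommGroup X]
    [NormedSpace ℂ X] [HilbertModule A X] (s s' : X →L[ℂ] X) : Prop :=
  ∀ x y : X, inner (A := A) (s x) y = inner (A := A) x (s' y)

theorem isAdjointable_of_mem_finiteRank {s : X →L[ℂ] X} (hs : s ∈ finiteRank A X) :
    IsAdjointable A s := by
  induction hs using Submodule.span_induction with
  | mem T hT =>
    obtain ⟨ξ, η, rfl⟩ := hT
    refine ⟨rankOne A η ξ, fun ζ ζ' => ?_⟩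
    rw [rankOne_apply, rankOne_apply, inner_rsmul_left, inner_rsmul_right, star_inner]
  | zero => exact ⟨0, fun ζ ζ' => by simp [inner_zero_left, inner_zero_right]⟩
  | add x y _ _ ihx ihy =>
    obtain ⟨x', hx'⟩ := ihx
    obtain ⟨y', hy'⟩ := ihy
    refine ⟨x' + y', fun ζ ζ' => ?_⟩
    simp only [add_apply, HilbertModule.inner_add_left, HilbertModule.inner_add_right, hx', hy']
  | smul c x _ ih =>
    obtain ⟨x', hx'⟩ := ih
    refine ⟨star c • x', fun ζ ζ' => ?_⟩
    rw [smul_apply, inner_csmul_left, hx', smul_apply, inner_csmul_right]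

theorem IsAdjoint.norm_apply_le {s s' : X →L[ℂ] X} (hs : IsAdjoint A s s') (y : X) :
    ‖s' y‖ ≤ ‖s‖ * ‖y‖ := by
  have key : ‖s' y‖ * ‖s' y‖ ≤ ‖s‖ * ‖y‖ * ‖s' y‖ :=
    calc ‖s' y‖ * ‖s' y‖ = ‖inner (A := A) (s (s' y)) y‖ := by
          rw [← sq, norm_sq_inner (A := A), hs]
      _ ≤ ‖s (s' y)‖ * ‖y‖ := norm_inner_le _ _
      _ ≤ ‖s‖ * ‖s' y‖ * ‖y‖ := by gcongr; exact s.le_opNorm _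
      _ = ‖s‖ * ‖y‖ * ‖s' y‖ := by ring
  rcases (norm_nonneg (s' y)).eq_or_lt with h0 | hpos
  · rw [← h0]; positivity
  · exact le_of_mul_le_mul_right key hpos

theorem IsAdjoint.opNorm_comp_le {s s' : X →L[ℂ] X} (hs : IsAdjoint A s s') :
    ‖s'.comp s‖ ≤ ‖s‖ * ‖s‖ :=
  (s'.opNorm_comp_le s).trans <| by
    gcongr
    exact ContinuousLinearMap.opNorm_le_bound _ (norm_nonneg _) hs.norm_apply_le

theorem IsAdjoint.isAdjointable_comp {s s' : X →L[ℂ] X} (hs : IsAdjoint A s s') :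
    IsAdjointable A (s'.comp s) :=
  ⟨s'.comp s, fun x y => by
    simp only [ContinuousLinearMap.comp_apply]
    rw [← star_inner, ← hs, star_inner, hs]⟩

section Covariance

variable {B : Type*} [NonUnitalNormedRing B] [NormedSpace ℂ B] {ψ : (X →L[ℂ] X) → B}

theorem map_zero_of_map_smul
    (hψsmul : ∀ (c : ℂ) (S : X →L[ℂ] X), S ∈ compacts A X → ψ (c • S) = c • ψ S) :
    ψ 0 = 0 := by
  simpa using hψsmul 0 0 zero_mem_compacts

theorem eqOn_compacts_mul_right [IsScalarTower ℂ B B]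
    (hψadd : ∀ S T : X →L[ℂ] X, S ∈ compacts A X → T ∈ compacts A X →
      ψ (S + T) = ψ S + ψ T)
    (hψsmul : ∀ (c : ℂ) (S : X →L[ℂ] X), S ∈ compacts A X → ψ (c • S) = c • ψ S)
    (hψcont : ContinuousOn ψ (compacts A X)) (c : B) (L : (X →L[ℂ] X) →L[ℂ] B)
    (hL : ∀ ξ η : X, ψ (rankOne A ξ η) * c = L (rankOne A ξ η)) :
    Set.EqOn (fun s => ψ s * c) L (compacts A X) := by
  have hfin : Set.EqOn (fun s => ψ s * c) L (finiteRank A X) := fun s hs => by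
    induction hs using Submodule.span_induction with
    | mem T hT =>
      obtain ⟨ξ, η, rfl⟩ := hT
      exact hL ξ η
    | zero => simp [map_zero_of_map_smul hψsmul]
    | add x y hx hy ihx ihy =>
      simp only at ihx ihy ⊢
      rw [hψadd x y (subset_closure hx) (subset_closure hy), add_mul, ihx, ihy, map_add]
    | smul a x hx ih =>
      simp only at ih ⊢
      rw [hψsmul a x (subset_closure hx), smul_mul_assoc, ih, map_smul]
  exact hfin.of_subset_closure (hψcont.mul continuousOn_const) L.continuous.continuousOn
    subset_closure subset_rfl

end Covariance

section Representation

variable {B : Type*} [CStarAlgebra B] {π : A →⋆ₙₐ[ℂ] B} {t : X →ₗ[ℂ] B}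

theorem norm_map_le_of_star_mul_eq (ht : ∀ ξ η : X, star (t ξ) * t η = π (inner (A := A) ξ η))
    (ξ : X) : ‖t ξ‖ ≤ ‖ξ‖ := by
  refine (pow_le_pow_iff_left₀ (norm_nonneg _) (norm_nonneg _) two_ne_zero).1 ?_
  rw [sq, ← CStarRing.norm_star_mul_self, ht, norm_sq_inner (A := A)]
  exact NonUnitalStarAlgHom.norm_apply_le π _

theorem continuous_of_star_mul_eq (ht : ∀ ξ η : X, star (t ξ) * t η = π (inner (A := A) ξ η)) :
    Continuous t :=
  AddMonoidHomClass.continuous_of_bound t 1 fun ξ => by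
    simpa using norm_map_le_of_star_mul_eq ht ξ

theorem map_rsmul_of_star_mul_eq (ht : ∀ ξ η : X, star (t ξ) * t η = π (inner (A := A) ξ η))
    (ξ : X) (c : A) : t (rsmul ξ c) = t ξ * π c := by
  have hstar : ∀ ζ, star (t ξ * π c) * t ζ = π (inner (A := A) (rsmul ξ c) ζ) := fun ζ => by
    rw [star_mul, mul_assoc, ht, ← map_star, ← map_mul, inner_rsmul_left]
  apply CStarRing.eq_of_star_mul_eq
  · rw [ht, hstar]
  · rw [← mul_assoc, ← mul_assoc, ht, hstar, ← map_mul]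

theorem map_rankOne_apply_of_star_mul_eq
    (ht : ∀ ξ η : X, star (t ξ) * t η = π (inner (A := A) ξ η)) (ξ η ζ : X) :
    t (rankOne A ξ η ζ) = t ξ * star (t η) * t ζ := by
  rw [rankOne_apply, map_rsmul_of_star_mul_eq ht, ← ht, mul_assoc]

end Representation

end HilbertModule

namespace QuotientData

variable {A B : Type*} [CStarAlgebra A] [CStarAlgebra B] {I : TwoSidedIdeal A}
  {X Y : Type*} [NormedAddCommGroup X] [NormedSpace ℂ X] [HilbertModule A X]
  [NormedAddCommGroup Y] [NormedSpace ℂ Y] [HilbertModule B Y]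
  (D : QuotientData A B I X Y)

theorem norm_q_le (ξ : X) : ‖D.q ξ‖ ≤ ‖ξ‖ := by
  refine (pow_le_pow_iff_left₀ (norm_nonneg _) (norm_nonneg _) two_ne_zero).1 ?_
  rw [norm_sq_inner (A := B), D.q_inner, norm_sq_inner (A := A)]
  exact NonUnitalStarAlgHom.norm_apply_le D.π _

theorem continuous_q : Continuous D.q :=
  AddMonoidHomClass.continuous_of_bound D.q 1 fun ξ => by simpa using D.norm_q_le ξ

theorem sq_norm_q_apply_le {s s' : X →L[ℂ] X} (hs : IsAdjoint A s s') (ζ : X) :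
    ‖D.q (s ζ)‖ ^ 2 ≤ ‖D.q ζ‖ * ‖D.q (s' (s ζ))‖ := by
  rw [norm_sq_inner (A := B), D.q_inner, hs, ← D.q_inner]
  exact norm_inner_le _ _

theorem norm_q_apply_pow_le (ζ : X) (n : ℕ) {s : X →L[ℂ] X} (hs : IsAdjointable A s) :
    ‖D.q (s ζ)‖ ^ 2 ^ n * ‖D.q ζ‖ ≤ ‖s‖ ^ 2 ^ n * ‖ζ‖ * ‖D.q ζ‖ ^ 2 ^ n := by
  induction n generalizing s with
  | zero =>
    simp only [pow_zero, pow_one]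
    gcongr
    exact (D.norm_q_le _).trans (s.le_opNorm ζ)
  | succ n ih =>
    obtain ⟨s', hs' : IsAdjoint A s s'⟩ := hs
    calc ‖D.q (s ζ)‖ ^ 2 ^ (n + 1) * ‖D.q ζ‖
        = (‖D.q (s ζ)‖ ^ 2) ^ 2 ^ n * ‖D.q ζ‖ := by ring
      _ ≤ (‖D.q ζ‖ * ‖D.q (s'.comp s ζ)‖) ^ 2 ^ n * ‖D.q ζ‖ := by
        gcongr; exact D.sq_norm_q_apply_le hs' ζ
      _ = ‖D.q ζ‖ ^ 2 ^ n * (‖D.q (s'.comp s ζ)‖ ^ 2 ^ n * ‖D.q ζ‖) := by ring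
      _ ≤ ‖D.q ζ‖ ^ 2 ^ n * (‖s'.comp s‖ ^ 2 ^ n * ‖ζ‖ * ‖D.q ζ‖ ^ 2 ^ n) :=
        mul_le_mul_of_nonneg_left (ih hs'.isAdjointable_comp) (by positivity)
      _ ≤ ‖D.q ζ‖ ^ 2 ^ n * ((‖s‖ * ‖s‖) ^ 2 ^ n * ‖ζ‖ * ‖D.q ζ‖ ^ 2 ^ n) := by
        gcongr; exact hs'.opNorm_comp_le
      _ = ‖s‖ ^ 2 ^ (n + 1) * ‖ζ‖ * ‖D.q ζ‖ ^ 2 ^ (n + 1) := by ring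

theorem norm_q_apply_le {s : X →L[ℂ] X} (hs : IsAdjointable A s) (ζ : X) :
    ‖D.q (s ζ)‖ ≤ ‖s‖ * ‖D.q ζ‖ := by
  rcases (norm_nonneg (D.q ζ)).eq_or_lt with h0 | hpos
  · obtain ⟨s', hs'⟩ := hs
    have := D.sq_norm_q_apply_le hs' ζ
    rw [← h0, zero_mul] at this
    rw [← h0, mul_zero]
    exact ((pow_eq_zero_iff two_ne_zero).1 (this.antisymm (by positivity))).le
  · refine le_of_forall_pow_two_pow_mul_le (by positivity) hpos (C := ‖ζ‖) fun n => ?_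
    rw [mul_pow]
    exact D.norm_q_apply_pow_le ζ n hs |>.trans_eq (by ring)

theorem exists_pushforward_of_mem_finiteRank {s : X →L[ℂ] X} (hs : s ∈ finiteRank A X) :
    ∃ S ∈ finiteRank B Y, ∀ ζ : X, S (D.q ζ) = D.q (s ζ) := by
  induction hs using Submodule.span_induction with
  | mem T hT =>
    obtain ⟨ξ, η, rfl⟩ := hT
    refine ⟨rankOne B (D.q ξ) (D.q η), Submodule.subset_span ⟨_, _, rfl⟩, fun ζ => ?_⟩
    rw [rankOne_apply, rankOne_apply, D.q_inner, D.q_rsmul]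
  | zero => exact ⟨0, Submodule.zero_mem _, fun ζ => by simp⟩
  | add x y _ _ ihx ihy =>
    obtain ⟨Sx, hSx, hSxr⟩ := ihx
    obtain ⟨Sy, hSy, hSyr⟩ := ihy
    exact ⟨Sx + Sy, Submodule.add_mem _ hSx hSy, fun ζ => by simp [hSxr, hSyr]⟩
  | smul c x _ ih =>
    obtain ⟨Sx, hSx, hSxr⟩ := ih
    exact ⟨c • Sx, Submodule.smul_mem _ _ hSx, fun ζ => by simp [hSxr]⟩

theorem opNorm_pushforward_le {s : X →L[ℂ] X} {S : Y →L[ℂ] Y} (hs : IsAdjointable A s)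
    (hS : ∀ ζ : X, S (D.q ζ) = D.q (s ζ)) : ‖S‖ ≤ ‖s‖ := by
  refine ContinuousLinearMap.opNorm_le_bound _ (norm_nonneg _) fun y => ?_
  obtain ⟨ζ, rfl⟩ := D.q_surjective y
  rw [hS]
  exact D.norm_q_apply_le hs ζ

theorem exists_pushforward_of_mem_compacts [CompleteSpace Y] {k : X →L[ℂ] X}
    (hk : k ∈ compacts A X) :
    ∃ T ∈ compacts B Y, ∀ ξ : X, T (D.q ξ) = D.q (k ξ) := by
  obtain ⟨u, hu, hulim⟩ := mem_closure_iff_seq_limit.mp hk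
  choose S hS hSu using fun n => D.exists_pushforward_of_mem_finiteRank (hu n)
  have hdist : ∀ m n, dist (S m) (S n) ≤ dist (u m) (u n) := fun m n => by
    rw [dist_eq_norm, dist_eq_norm]
    refine D.opNorm_pushforward_le (isAdjointable_of_mem_finiteRank (sub_mem (hu m) (hu n)))
      fun ζ => ?_
    rw [sub_apply, sub_apply, hSu, hSu, map_sub]
  have hcauchy : CauchySeq S := cauchySeq_iff_tendsto_dist_atTop_0.2 <|
    squeeze_zero (fun _ => dist_nonneg) (fun p => hdist p.1 p.2)
      (cauchySeq_iff_tendsto_dist_atTop_0.1 hulim.cauchySeq)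
  obtain ⟨T, hT⟩ := cauchySeq_tendsto_of_complete hcauchy
  refine ⟨T, mem_closure_of_tendsto hT (.of_forall hS),
    fun ξ => tendsto_nhds_unique ((ContinuousLinearMap.apply ℂ Y (D.q ξ)).continuous.tendsto T
      |>.comp hT) ?_⟩
  simp_rw [Function.comp_def, ContinuousLinearMap.apply_apply, hSu]
  exact (D.continuous_q.tendsto _).comp
    ((ContinuousLinearMap.apply ℂ X ξ).continuous.tendsto k |>.comp hulim)

theorem q_eq_of_map_eq {C : Type*} [CStarAlgebra C] {π : A →⋆ₙₐ[ℂ] C} {t : X →ₗ[ℂ] C}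
    (ht : ∀ ξ η : X, star (t ξ) * t η = π (inner (A := A) ξ η))
    (hker : ∀ a : A, π a = 0 → a ∈ I) {ξ η : X} (h : t ξ = t η) : D.q ξ = D.q η := by
  have hπ : π (inner (A := A) (ξ - η) (ξ - η)) = 0 := by
    rw [← ht, map_sub, h, sub_self, mul_zero]
  rw [← sub_eq_zero, ← map_sub, ← norm_eq_zero, ← sq_eq_zero_iff, norm_sq_inner (A := B),
    D.q_inner, (D.π_ker _).2 (hker _ hπ), norm_zero]

end QuotientData

namespace Correspondence

variable {A B : Type*} [CStarAlgebra A] [CStarAlgebra B] {X : Type*}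
  [NormedAddCommGroup X] [NormedSpace ℂ X] [Correspondence A X]
  {π : A →⋆ₙₐ[ℂ] B} {t : X →ₗ[ℂ] B}

theorem corrApply_ker_subset (ht₁ : ∀ ξ η : X, star (t ξ) * t η = π (inner (A := A) ξ η))
    (ht₂ : ∀ (a : A) (ξ : X), π a * t ξ = t (lsmul a ξ)) :
    corrApply X {a : A | π a = 0} ⊆ {a : A | π a = 0} := by
  refine closure_minimal ?_ (isClosed_eq (map_continuous π) continuous_const)
  refine (Submodule.span_le (p := LinearMap.ker (π : A →ₗ[ℂ] B))).2 ?_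
  rintro _ ⟨a, ha, ξ, η, rfl⟩
  change π _ = 0
  rw [← ht₁, ← ht₂, ha, zero_mul, mul_zero]

theorem map_lsmul_star_eq_zero (ht : ∀ ξ η : X, star (t ξ) * t η = π (inner (A := A) ξ η))
    {b : A} (hb : b ∈ corrInv X {a : A | π a = 0}) (η : X) : t (lsmul (star b) η) = 0 := by
  rw [← CStarRing.star_mul_self_eq_zero_iff, ht, inner_lsmul_left, star_star]
  exact hb _ _

end Correspondence

open HilbertModule Correspondence in
theorem stmt16_general {A B B' : Type*} [CStarAlgebra A] [CStarAlgebra B] [CStarAlgebra B']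
    {X Y : Type*} [NormedAddCommGroup X] [NormedSpace ℂ X] [Correspondence A X]
    [NormedAddCommGroup Y] [NormedSpace ℂ Y] [HilbertModule B' Y]
    [CompleteSpace Y]
    (π : A →⋆ₙₐ[ℂ] B) (t : X →ₗ[ℂ] B)
    (ht₁ : ∀ ξ η : X, star (t ξ) * t η = π (inner (A := A) ξ η))
    (ht₂ : ∀ (a : A) (ξ : X), π a * t ξ = t (lsmul a ξ))
    -- `ψ` agrees on `K(X)` with the canonical map `ψ_t`:
    (ψ : (X →L[ℂ] X) → B)
    (hψθ : ∀ ξ η : X, ψ (rankOne A ξ η) = t ξ * star (t η))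
    (hψadd : ∀ S T : X →L[ℂ] X, S ∈ compacts A X → T ∈ compacts A X →
      ψ (S + T) = ψ S + ψ T)
    (hψsmul : ∀ (c : ℂ) (S : X →L[ℂ] X), S ∈ compacts A X → ψ (c • S) = c • ψ S)
    (hψcont : ContinuousOn ψ (compacts A X))
    -- `I = I_{(π,t)} = ker π`, and `Y = X_I` presented by quotient data:
    (I : TwoSidedIdeal A) (hIker : (I : Set A) = {a : A | π a = 0})
    (D : QuotientData A B' I X Y) :
    corrApply X (I : Set A) ⊆ (I : Set A) ∧
    (I : Set A) ⊆ {a : A | π a ∈ ψ '' compacts A X} ∧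
    {a : A | π a ∈ ψ '' compacts A X} ⊆ JofI D := by
  have hI : ∀ a, a ∈ I ↔ π a = 0 := fun a => Set.ext_iff.1 hIker a
  refine ⟨hIker ▸ corrApply_ker_subset ht₁ ht₂,
    fun a ha => ⟨0, zero_mem_compacts, by rw [map_zero_of_map_smul hψsmul, (hI a).1 ha]⟩, ?_⟩
  rintro a ⟨k, hk, hka⟩
  let tL : X →L[ℂ] B := ⟨t, continuous_of_star_mul_eq ht₁⟩
  have hkt : ∀ ξ, ψ k * t ξ = t (k ξ) := fun ξ =>
    eqOn_compacts_mul_right hψadd hψsmul hψcont (t ξ)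
      (tL.comp (ContinuousLinearMap.apply ℂ X ξ))
      (fun ζ η => by simp [tL, map_rankOne_apply_of_star_mul_eq ht₁, hψθ]) hk
  have hkπ : ∀ b ∈ corrInv X (I : Set A), ψ k * π b = 0 := fun b hb =>
    eqOn_compacts_mul_right hψadd hψsmul hψcont (π b) 0 (fun ξ η => by
      rw [hψθ, mul_assoc, ← star_star (π b), ← star_mul, ← map_star, ht₂,
        map_lsmul_star_eq_zero ht₁ (hIker ▸ hb), star_zero, mul_zero, zero_apply]) hk
  obtain ⟨T, hT, hTk⟩ := D.exists_pushforward_of_mem_compacts hk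
  refine ⟨⟨T, hT, fun ξ => (hTk ξ).trans (D.q_eq_of_map_eq ht₁ (fun a => (hI a).2) ?_)⟩,
    fun b hb => (hI _).2 (by rw [map_mul, ← hka, hkπ b hb])⟩
  rw [← hkt, hka, ht₂]

open HilbertModule Correspondence in
/-- for a representation `(π, t)` of `X`, the pair
`(I_{(π,t)}, I'_{(π,t)}) = (ker π, π⁻¹(ψ_t(K(X))))` is a T-pair:
`ker π` is positively invariant and `ker π ⊂ π⁻¹(ψ_t(K(X))) ⊂ J(ker π)`. -/
theorem stmt16 {A B B' : Type*} [CStarAlgebra A] [CStarAlgebra B] [CStarAlgebra B']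
    {X Y : Type*} [NormedAddCommGroup X] [NormedSpace ℂ X] [Correspondence A X]
    [NormedAddCommGroup Y] [NormedSpace ℂ Y] [HilbertModule B' Y]
    [CompleteSpace X] [CompleteSpace Y]
    (π : A →⋆ₙₐ[ℂ] B) (t : X →ₗ[ℂ] B)
    (ht₁ : ∀ ξ η : X, star (t ξ) * t η = π (inner (A := A) ξ η))
    (ht₂ : ∀ (a : A) (ξ : X), π a * t ξ = t (lsmul a ξ))
    -- `ψ` agrees on `K(X)` with the canonical map `ψ_t`:
    (ψ : (X →L[ℂ] X) → B)
    (hψθ : ∀ ξ η : X, ψ (rankOne A ξ η) = t ξ * star (t η))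
    (hψadd : ∀ S T : X →L[ℂ] X, S ∈ compacts A X → T ∈ compacts A X →
      ψ (S + T) = ψ S + ψ T)
    (hψsmul : ∀ (c : ℂ) (S : X →L[ℂ] X), S ∈ compacts A X → ψ (c • S) = c • ψ S)
    (hψcont : ContinuousOn ψ (compacts A X))
    -- `I = I_{(π,t)} = ker π`, and `Y = X_I` presented by quotient data:
    (I : TwoSidedIdeal A) (hIker : (I : Set A) = {a : A | π a = 0})
    (hI : IsClosed (I : Set A))
    (D : QuotientData A B' I X Y) :
    corrApply X (I : Set A) ⊆ (I : Set A) ∧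
    (I : Set A) ⊆ {a : A | π a ∈ ψ '' compacts A X} ∧
    {a : A | π a ∈ ψ '' compacts A X} ⊆ JofI D :=
  stmt16_general π t ht₁ ht₂ ψ hψθ hψadd hψsmul hψcont I hIker D
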